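/- The set of matrices {N_α (α ∈ F), I_{q+2}⊗(J_{q²}−I_{q²}), I_{(q+2)q²}} is a commutative strongly regular decomposition of the complete graph on (q+2)q² vertices; explicitly: (a) Σ_{α∈F} N_α + I_{q+2}⊗(J_{q²}−I_{q²}) + I_{(q+2)q²} = J_{(q+2)q²}; (b) each N_α is a symmetric (0,1)-matrix with zero diagonal satisfying N_α² = q²·I_{(q+2)q²} + q·J_{(q+2)q²} (so it is the adjacency matrix of a strongly regular graph with parameters ((q+2)q², q²+q, q, q)); (c) N_α·N_β = N_β·N_α for all α, β ∈ F, and each N_α commutes with I_{q+2}⊗(J_{q²}−I_{q²}). -/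
import Mathlib


open Matrix Kronecker

/-- The `q × q` permutation matrix `φ(α)` with `(x,y)`-entry `1` iff `y = x + α`. -/
noncomputable def phi {F : Type*} [Add F] [DecidableEq F] (α : F) : Matrix F F ℝ :=
  Matrix.of fun x y => if y = x + α then (1 : ℝ) else 0

/-- The all-ones matrix. -/
noncomputable def Jmat (n : Type*) : Matrix n n ℝ :=
  Matrix.of fun _ _ => (1 : ℝ)

/-- The auxiliary matrix `C_{a,α'}` with `((β,x),(β',y))`-entry `1` iff
`y = x + a(β+β') + α'`. -/
noncomputable def Cmat {F : Type*} [Field F] [DecidableEq F] (a α' : F) :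
    Matrix (F × F) (F × F) ℝ :=
  Matrix.of fun p p' => if p'.2 = p.2 + a * (p.1 + p'.1) + α' then (1 : ℝ) else 0

/-- Embedding of `F ∪ {y}` into `S = F ∪ {x, y}`, coded as `Option F → F ⊕ Bool`
(`none ↦ y = Sum.inr true`; the symbol `x` is `Sum.inr false`). -/
def emb {F : Type*} : Option F → F ⊕ Bool :=
  fun o => o.elim (Sum.inr true) Sum.inl

/-- `C_{a,α}` for `a ∈ F ∪ {y}`, where `C_{y,α} = φ(α) ⊗ J_q`. -/
noncomputable def CmatE {F : Type*} [Field F] [DecidableEq F] (a : Option F) (α : F) :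
    Matrix (F × F) (F × F) ℝ :=
  a.elim (phi α ⊗ₖ Jmat F) (fun b => Cmat b α)

/-- `N_α = Σ_{a ∈ F ∪ {y}} P_a ⊗ C_{a,α}`. -/
noncomputable def Nmat {F : Type*} [Field F] [Fintype F] [DecidableEq F]
    (P : F ⊕ Bool → Matrix (F ⊕ Bool) (F ⊕ Bool) ℝ) (α : F) :
    Matrix ((F ⊕ Bool) × F × F) ((F ⊕ Bool) × F × F) ℝ :=
  ∑ a : Option F, P (emb a) ⊗ₖ CmatE a α


set_option linter.unusedSectionVars false
set_option maxHeartbeats 1000000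
section Aux

variable {F : Type*} [Field F] [Fintype F] [DecidableEq F]

lemma sum_ind {γ : Type*} [Fintype γ] [DecidableEq γ] (p : γ → Prop) [DecidablePred p]
    (c : γ) (h : ∀ x, p x ↔ x = c) :
    ∑ x : γ, (if p x then (1 : ℝ) else 0) = 1 := by
  simp only [h]
  simp

lemma eq_add_comm2 (h2 : ∀ x : F, x + x = 0) (u v w : F) : u = v + w ↔ v = u + w := by
  constructor <;> rintro rfl <;> rw [add_assoc, h2, add_zero]

lemma phi_apply (α : F) (x y : F) : phi α x y = if y = x + α then (1 : ℝ) else 0 := rfl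

lemma Jmat_apply (n : Type*) (i j : n) : Jmat n i j = 1 := rfl

lemma Cmat_apply (b α : F) (p p' : F × F) :
    Cmat b α p p' = if p'.2 = p.2 + b * (p.1 + p'.1) + α then (1 : ℝ) else 0 := rfl

lemma Jmat_kron_Jmat (n m : Type*) : Jmat n ⊗ₖ Jmat m = Jmat (n × m) := by
  ext ⟨a, b⟩ ⟨c, d⟩
  simp [Jmat]

lemma kron_sum {ι n m : Type*} (s : Finset ι) (A : Matrix n n ℝ)
    (f : ι → Matrix m m ℝ) : A ⊗ₖ (∑ i ∈ s, f i) = ∑ i ∈ s, A ⊗ₖ f i := by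
  ext ⟨a, b⟩ ⟨c, d⟩
  simp [Matrix.sum_apply, Finset.mul_sum]

lemma sum_kron {ι n m : Type*} (s : Finset ι) (B : Matrix m m ℝ)
    (f : ι → Matrix n n ℝ) : (∑ i ∈ s, f i) ⊗ₖ B = ∑ i ∈ s, f i ⊗ₖ B := by
  ext ⟨a, b⟩ ⟨c, d⟩
  simp [Matrix.sum_apply, Finset.sum_mul]

lemma kron_sub {n m : Type*} (A : Matrix n n ℝ) (B C : Matrix m m ℝ) :
    A ⊗ₖ (B - C) = A ⊗ₖ B - A ⊗ₖ C := by
  ext ⟨a, b⟩ ⟨c, d⟩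
  simp [Matrix.sub_apply, mul_sub]

lemma sub_kron {n m : Type*} (A B : Matrix n n ℝ) (C : Matrix m m ℝ) :
    (A - B) ⊗ₖ C = A ⊗ₖ C - B ⊗ₖ C := by
  ext ⟨a, b⟩ ⟨c, d⟩
  simp [Matrix.sub_apply, sub_mul]

lemma J_mul_J (n : Type*) [Fintype n] :
    Jmat n * Jmat n = (Fintype.card n : ℝ) • Jmat n := by
  ext i j
  simp [Jmat, Matrix.mul_apply, Matrix.smul_apply, Finset.sum_const, nsmul_eq_mul]

local notation "q" => (Fintype.card F : ℝ)

lemma sum_phi : ∑ α : F, phi α = Jmat F := by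
  ext x y
  rw [Matrix.sum_apply]
  simp only [phi_apply, Jmat_apply]
  exact sum_ind _ (y - x) (fun α => by constructor <;> intro h <;> (rw [h]; ring))

lemma phi_mul_phi (α β : F) : phi α * phi β = phi (α + β) := by
  ext x y
  rw [Matrix.mul_apply]
  simp only [phi_apply, boole_mul]
  rw [Finset.sum_ite_eq' Finset.univ (x + α) (fun z => if y = z + β then (1:ℝ) else 0),
    if_pos (Finset.mem_univ _), add_assoc]

lemma phi_zero : phi (0 : F) = 1 := by
  ext x y
  simp [phi, Matrix.one_apply, eq_comm]

lemma sum_Cmat (b : F) : ∑ α : F, Cmat b α = Jmat (F × F) := by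
  ext p p'
  rw [Matrix.sum_apply]
  simp only [Cmat_apply, Jmat_apply]
  exact sum_ind _ (p'.2 - (p.2 + b * (p.1 + p'.1)))
    (fun α => by constructor <;> intro h <;> (rw [h]; ring))

lemma sum_CmatE (a : Option F) : ∑ α : F, CmatE a α = Jmat (F × F) := by
  cases a with
  | none =>
      show ∑ α : F, phi α ⊗ₖ Jmat F = _
      rw [← sum_kron, sum_phi, Jmat_kron_Jmat]
  | some b => exact sum_Cmat b

lemma Cmat_transpose (h2 : ∀ x : F, x + x = 0) (b α : F) : (Cmat b α)ᵀ = Cmat b α := by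
  ext p p'
  simp only [Matrix.transpose_apply, Cmat_apply]
  have h : (p.2 = p'.2 + b * (p'.1 + p.1) + α) ↔ (p'.2 = p.2 + b * (p.1 + p'.1) + α) := by
    simp only [add_comm p'.1 p.1, add_assoc]
    exact eq_add_comm2 h2 _ _ _
  simp only [h]

lemma phi_transpose (h2 : ∀ x : F, x + x = 0) (α : F) : (phi α)ᵀ = phi α := by
  ext x y
  simp only [Matrix.transpose_apply, phi_apply]
  simp only [eq_add_comm2 h2 x y α]

lemma CmatE_transpose (h2 : ∀ x : F, x + x = 0) (a : Option F) (α : F) :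
    (CmatE a α)ᵀ = CmatE a α := by
  cases a with
  | none =>
      show (phi α ⊗ₖ Jmat F)ᵀ = phi α ⊗ₖ Jmat F
      rw [← Matrix.kroneckerMap_transpose, phi_transpose h2]
      rfl
  | some b => exact Cmat_transpose h2 b α

lemma Cmat_mul_Cmat_same (h2 : ∀ x : F, x + x = 0) (b α β : F) :
    Cmat b α * Cmat b β = q • Cmat b (α + β) := by
  have h20 : (2 : F) = 0 := by
    calc (2 : F) = 1 + 1 := by norm_num
    _ = 0 := h2 1
  ext ⟨c, x⟩ ⟨e, z⟩
  rw [Matrix.mul_apply, Fintype.sum_prod_type]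
  simp only [Cmat_apply, boole_mul]
  have inner : ∀ d : F, (∑ w : F, if w = x + b * (c + d) + α then
      (if z = w + b * (d + e) + β then (1:ℝ) else 0) else 0)
      = if z = (x + b * (c + d) + α) + b * (d + e) + β then (1:ℝ) else 0 := by
    intro d
    rw [Finset.sum_ite_eq' Finset.univ (x + b * (c + d) + α)
      (fun w => if z = w + b * (d + e) + β then (1:ℝ) else 0), if_pos (Finset.mem_univ _)]
  rw [Finset.sum_congr rfl fun d _ => inner d]
  have cond : ∀ d : F, ((z = (x + b * (c + d) + α) + b * (d + e) + β)
      ↔ (z = x + b * (c + e) + (α + β))) := by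
    intro d
    constructor <;> intro h <;>
      first
        | linear_combination h + (b * d) * h20
        | linear_combination h - (b * d) * h20
  simp only [cond]
  rw [Finset.sum_const, Matrix.smul_apply, Cmat_apply]
  simp [nsmul_eq_mul]

lemma Cmat_mul_Cmat_ne (h2 : ∀ x : F, x + x = 0) {b b' : F} (hbb : b ≠ b') (α β : F) :
    Cmat b α * Cmat b' β = Jmat (F × F) := by
  have hne : b + b' ≠ 0 := by
    intro h
    apply hbb
    have hb := (eq_add_comm2 h2 0 b b').mp h.symm
    rwa [zero_add] at hb
  ext ⟨c, x⟩ ⟨e, z⟩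
  rw [Matrix.mul_apply, Fintype.sum_prod_type]
  simp only [Cmat_apply, boole_mul]
  have inner : ∀ d : F, (∑ w : F, if w = x + b * (c + d) + α then
      (if z = w + b' * (d + e) + β then (1:ℝ) else 0) else 0)
      = if z = (x + b * (c + d) + α) + b' * (d + e) + β then (1:ℝ) else 0 := by
    intro d
    rw [Finset.sum_ite_eq' Finset.univ (x + b * (c + d) + α)
      (fun w => if z = w + b' * (d + e) + β then (1:ℝ) else 0), if_pos (Finset.mem_univ _)]
  rw [Finset.sum_congr rfl fun d _ => inner d, Jmat_apply]
  apply sum_ind _ ((z - (x + b * c + b' * e + α + β)) / (b + b'))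
  intro d
  rw [eq_div_iff hne]
  constructor <;> intro h <;> linear_combination -h

lemma phiJ_mul_Cmat (α b β : F) : (phi α ⊗ₖ Jmat F) * Cmat b β = Jmat (F × F) := by
  ext ⟨c, x⟩ ⟨e, z⟩
  rw [Matrix.mul_apply, Fintype.sum_prod_type, Jmat_apply]
  simp only [Matrix.kronecker_apply, phi_apply, Jmat_apply, Cmat_apply, mul_one, boole_mul]
  have inner : ∀ d : F, (∑ w : F, if d = c + α then
      (if z = w + b * (d + e) + β then (1:ℝ) else 0) else 0)
      = if d = c + α then (1:ℝ) else 0 := by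
    intro d
    by_cases hd : d = c + α
    · simp only [if_pos hd]
      exact sum_ind _ (z - b * (d + e) - β)
        (fun w => by constructor <;> intro h <;> (rw [h]; ring))
    · simp [if_neg hd]
  rw [Finset.sum_congr rfl fun d _ => inner d]
  exact sum_ind _ (c + α) (fun d => Iff.rfl)

lemma Cmat_mul_phiJ (α b β : F) : Cmat b β * (phi α ⊗ₖ Jmat F) = Jmat (F × F) := by
  ext ⟨c, x⟩ ⟨e, z⟩
  rw [Matrix.mul_apply, Fintype.sum_prod_type, Jmat_apply]
  simp only [Matrix.kronecker_apply, phi_apply, Jmat_apply, Cmat_apply, mul_one, boole_mul]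
  have inner : ∀ d : F, (∑ w : F, if w = x + b * (c + d) + β then
      (if e = d + α then (1:ℝ) else 0) else 0)
      = if e = d + α then (1:ℝ) else 0 := by
    intro d
    rw [Finset.sum_ite_eq' Finset.univ (x + b * (c + d) + β)
      (fun _ => if e = d + α then (1:ℝ) else 0), if_pos (Finset.mem_univ _)]
  rw [Finset.sum_congr rfl fun d _ => inner d]
  exact sum_ind _ (e - α) (fun d => by constructor <;> intro h <;> (rw [h]; ring))

lemma CmatE_mul_same (h2 : ∀ x : F, x + x = 0) (a : Option F) (α β : F) :
    CmatE a α * CmatE a β = q • CmatE a (α + β) := by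
  cases a with
  | none =>
      show (phi α ⊗ₖ Jmat F) * (phi β ⊗ₖ Jmat F) = q • (phi (α + β) ⊗ₖ Jmat F)
      rw [← Matrix.mul_kronecker_mul, phi_mul_phi, J_mul_J, Matrix.kronecker_smul]
  | some b => exact Cmat_mul_Cmat_same h2 b α β

lemma CmatE_mul_ne (h2 : ∀ x : F, x + x = 0) {a a' : Option F} (h : a ≠ a') (α β : F) :
    CmatE a α * CmatE a' β = Jmat (F × F) := by
  cases a with
  | none =>
      cases a' with
      | none => exact absurd rfl h
      | some b' => exact phiJ_mul_Cmat α b' β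
  | some b =>
      cases a' with
      | none => exact Cmat_mul_phiJ β b α
      | some b' =>
          have hbb : b ≠ b' := fun hb => h (by rw [hb])
          exact Cmat_mul_Cmat_ne h2 hbb α β

lemma CmatE_mul_J (h2 : ∀ x : F, x + x = 0) (a : Option F) (α : F) :
    CmatE a α * Jmat (F × F) = q • Jmat (F × F) := by
  cases a with
  | none =>
      show (phi α ⊗ₖ Jmat F) * Jmat (F × F) = _
      conv_lhs => rw [← sum_Cmat (0 : F)]
      rw [Finset.mul_sum,
        Finset.sum_congr rfl fun β _ => phiJ_mul_Cmat α 0 β, Finset.sum_const,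
        Finset.card_univ, ← Nat.cast_smul_eq_nsmul ℝ]
  | some b =>
      show Cmat b α * Jmat (F × F) = _
      have hb : b ≠ b + 1 := by simp
      conv_lhs => rw [← sum_Cmat (b + 1)]
      rw [Finset.mul_sum,
        Finset.sum_congr rfl fun β _ => Cmat_mul_Cmat_ne h2 hb α β, Finset.sum_const,
        Finset.card_univ, ← Nat.cast_smul_eq_nsmul ℝ]

lemma J_mul_CmatE (h2 : ∀ x : F, x + x = 0) (a : Option F) (α : F) :
    Jmat (F × F) * CmatE a α = q • Jmat (F × F) := by
  cases a with
  | none =>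
      show Jmat (F × F) * (phi α ⊗ₖ Jmat F) = _
      conv_lhs => rw [← sum_Cmat (0 : F)]
      rw [Finset.sum_mul,
        Finset.sum_congr rfl fun β _ => Cmat_mul_phiJ α 0 β, Finset.sum_const,
        Finset.card_univ, ← Nat.cast_smul_eq_nsmul ℝ]
  | some b =>
      show Jmat (F × F) * Cmat b α = _
      have hb : b + 1 ≠ b := by simp
      conv_lhs => rw [← sum_Cmat (b + 1)]
      rw [Finset.sum_mul,
        Finset.sum_congr rfl fun β _ => Cmat_mul_Cmat_ne h2 hb β α, Finset.sum_const,
        Finset.card_univ, ← Nat.cast_smul_eq_nsmul ℝ]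

lemma sum_CmatE_zero (h2 : ∀ x : F, x + x = 0) :
    (∑ a : Option F, CmatE a (0 : F)) = Jmat (F × F) + q • 1 := by
  ext ⟨c, x⟩ ⟨e, z⟩
  rw [Matrix.sum_apply, Fintype.sum_option]
  show (phi 0 ⊗ₖ Jmat F) (c, x) (e, z) + (∑ b : F, Cmat b 0 (c, x) (e, z)) = _
  simp only [Matrix.kronecker_apply, phi_apply, Jmat_apply, Cmat_apply, mul_one,
    Matrix.add_apply, Matrix.smul_apply, Matrix.one_apply, add_zero]
  by_cases hce : e = c
  · subst hce
    rw [if_pos rfl]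
    have hb : ∀ b : F, (z = x + b * (e + e)) ↔ (z = x) := fun b => by
      rw [h2 e, mul_zero, add_zero]
    simp only [hb]
    rw [Finset.sum_const, Finset.card_univ, nsmul_eq_mul]
    have hpe : ((e, x) = (e, z)) ↔ (z = x) := by
      simp [Prod.ext_iff, eq_comm]
    rw [smul_eq_mul]
    simp only [hpe]
  · have hec : c + e ≠ 0 := by
      intro h
      apply hce
      have := (eq_add_comm2 h2 0 c e).mp h.symm
      rw [zero_add] at this
      exact this.symm
    rw [if_neg hce, zero_add]
    have hsum : (∑ b : F, if z = x + b * (c + e) then (1:ℝ) else 0) = 1 := by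
      apply sum_ind _ ((z - x) / (c + e))
      intro b
      rw [eq_div_iff hec]
      constructor <;> intro h <;> linear_combination -h
    rw [hsum, if_neg (fun h : (c, x) = (e, z) => hce (congrArg Prod.fst h).symm),
      smul_zero, add_zero]

end Aux

section Main

variable {F : Type*} [Field F] [Fintype F] [DecidableEq F]

local notation "q" => (Fintype.card F : ℝ)

lemma sum01 {ι : Type*} [Fintype ι] (f : ι → ℝ) (h01 : ∀ i, f i = 0 ∨ f i = 1)
    (hle : ∑ i, f i ≤ 1) : (∑ i, f i) = 0 ∨ (∑ i, f i) = 1 := by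
  by_cases hz : ∀ i, f i = 0
  · exact Or.inl (Finset.sum_eq_zero fun i _ => hz i)
  · right
    push_neg at hz
    obtain ⟨i, hi⟩ := hz
    have hfi : f i = 1 := (h01 i).resolve_left hi
    have h1le : f i ≤ ∑ j, f j :=
      Finset.single_le_sum (fun j _ => by rcases h01 j with h | h <;> rw [h] <;> norm_num)
        (Finset.mem_univ i)
    rw [hfi] at h1le
    linarith

lemma hNapply (P : F ⊕ Bool → Matrix (F ⊕ Bool) (F ⊕ Bool) ℝ) (α : F)
    (v w : (F ⊕ Bool) × F × F) :
    Nmat P α v w = ∑ a : Option F, P (emb a) v.1 w.1 * CmatE a α v.2 w.2 := by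
  simp [Nmat, Matrix.sum_apply]

lemma hC01 (a : Option F) (α : F) (p p' : F × F) :
    CmatE a α p p' = 0 ∨ CmatE a α p p' = 1 := by
  cases a with
  | none =>
      show (phi α ⊗ₖ Jmat F) p p' = 0 ∨ (phi α ⊗ₖ Jmat F) p p' = 1
      rw [Matrix.kroneckerMap_apply, Jmat_apply, mul_one, phi_apply]
      by_cases h : p'.1 = p.1 + α <;> simp [h]
  | some b =>
      show Cmat b α p p' = 0 ∨ Cmat b α p p' = 1
      rw [Cmat_apply]
      by_cases h : p'.2 = p.2 + b * (p.1 + p'.1) + α <;> simp [h]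

lemma Nmul (h2 : ∀ x : F, x + x = 0) (P : F ⊕ Bool → Matrix (F ⊕ Bool) (F ⊕ Bool) ℝ)
    (hPP : ∀ s, P s * P s = 1) (α β : F) :
    Nmat P α * Nmat P β =
      (∑ a : Option F, (1 : Matrix (F ⊕ Bool) (F ⊕ Bool) ℝ) ⊗ₖ
          (q • CmatE a (α + β) - Jmat (F × F))) +
        ((∑ a : Option F, P (emb a)) * (∑ a : Option F, P (emb a))) ⊗ₖ Jmat (F × F) := by
  show (∑ a : Option F, P (emb a) ⊗ₖ CmatE a α) * (∑ a : Option F, P (emb a) ⊗ₖ CmatE a β) = _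
  rw [Finset.sum_mul_sum]
  have step : ∀ a a' : Option F,
      (P (emb a) ⊗ₖ CmatE a α) * (P (emb a') ⊗ₖ CmatE a' β)
      = (P (emb a) * P (emb a')) ⊗ₖ Jmat (F × F)
        + (if a' = a then (1 : Matrix (F ⊕ Bool) (F ⊕ Bool) ℝ) ⊗ₖ
            (q • CmatE a (α + β) - Jmat (F × F)) else 0) := by
    intro a a'
    by_cases h : a' = a
    · subst h
      rw [if_pos rfl, ← Matrix.mul_kronecker_mul, CmatE_mul_same h2, hPP, kron_sub]
      abel
    · rw [if_neg h, add_zero, ← Matrix.mul_kronecker_mul,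
        CmatE_mul_ne h2 (fun hh => h hh.symm)]
  rw [Finset.sum_congr rfl fun a _ => Finset.sum_congr rfl fun a' _ => step a a']
  have inner2 : ∀ a : Option F,
      (∑ a' : Option F, ((P (emb a) * P (emb a')) ⊗ₖ Jmat (F × F)
        + (if a' = a then (1 : Matrix (F ⊕ Bool) (F ⊕ Bool) ℝ) ⊗ₖ
            (q • CmatE a (α + β) - Jmat (F × F)) else 0)))
      = (P (emb a) * (∑ a' : Option F, P (emb a'))) ⊗ₖ Jmat (F × F)
        + (1 : Matrix (F ⊕ Bool) (F ⊕ Bool) ℝ) ⊗ₖ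
            (q • CmatE a (α + β) - Jmat (F × F)) := by
    intro a
    rw [Finset.sum_add_distrib, Finset.sum_ite_eq' Finset.univ a, if_pos (Finset.mem_univ a),
      ← sum_kron, Finset.mul_sum]
  rw [Finset.sum_congr rfl fun a _ => inner2 a, Finset.sum_add_distrib, ← sum_kron,
    ← Finset.sum_mul]
  exact add_comm _ _

end Main

/-- `{N_α (α ∈ F), I_{q+2}⊗(J_{q²}−I_{q²}), I}` is a commutative strongly regular
decomposition of the complete graph on `(q+2)q²` vertices:
(a) `Σ_α N_α + I_{q+2}⊗(J_{q²}−I_{q²}) + I = J`;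
(b) each `N_α` is a symmetric (0,1)-matrix with zero diagonal and
`N_α² = q²·I + q·J` (an SRG with parameters `((q+2)q², q²+q, q, q)`);
(c) the `N_α` pairwise commute and commute with `I_{q+2}⊗(J_{q²}−I_{q²})`. -/
theorem stmt8 {F : Type*} [Field F] [Fintype F] [DecidableEq F]
    (m : ℕ) (hm : 1 ≤ m) (hF : Fintype.card F = 2 ^ m)
    (P : F ⊕ Bool → Matrix (F ⊕ Bool) (F ⊕ Bool) ℝ)
    (hPsymm : ∀ a, (P a)ᵀ = P a)
    (hP01 : ∀ a i j, P a i j = 0 ∨ P a i j = 1)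
    (hPperm : ∀ a, P a * (P a)ᵀ = 1)
    (hPx : P (Sum.inr false) = 1)
    (hPsum : ∑ a : F ⊕ Bool, P a = Jmat (F ⊕ Bool)) :
    ((∑ α : F, Nmat P α) +
        (1 : Matrix (F ⊕ Bool) (F ⊕ Bool) ℝ) ⊗ₖ (Jmat (F × F) - 1) + 1 =
        Jmat ((F ⊕ Bool) × F × F)) ∧
      (∀ α : F,
        (Nmat P α)ᵀ = Nmat P α ∧
        (∀ v w, Nmat P α v w = 0 ∨ Nmat P α v w = 1) ∧
        (∀ v, Nmat P α v v = 0) ∧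
        Nmat P α * Nmat P α =
          ((2 ^ m : ℝ)) ^ 2 • (1 : Matrix ((F ⊕ Bool) × F × F) ((F ⊕ Bool) × F × F) ℝ) +
            (2 ^ m : ℝ) • Jmat ((F ⊕ Bool) × F × F)) ∧
      (∀ α β : F, Nmat P α * Nmat P β = Nmat P β * Nmat P α) ∧
      (∀ α : F,
        Nmat P α * ((1 : Matrix (F ⊕ Bool) (F ⊕ Bool) ℝ) ⊗ₖ (Jmat (F × F) - 1)) =
          ((1 : Matrix (F ⊕ Bool) (F ⊕ Bool) ℝ) ⊗ₖ (Jmat (F × F) - 1)) * Nmat P α) := by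
  -- characteristic 2
  have hchar : (2 : F) = 0 := by
    have hprime : (ringChar F).Prime := CharP.char_is_prime F (ringChar F)
    obtain ⟨n, -, hcard⟩ := FiniteField.card F (ringChar F)
    have hdvd : ringChar F ∣ 2 := by
      apply hprime.dvd_of_dvd_pow (n := m)
      rw [← hF, hcard]
      exact dvd_pow_self _ n.pos.ne'
    have hr2 : ringChar F = 2 := (Nat.prime_dvd_prime_iff_eq hprime Nat.prime_two).mp hdvd
    calc (2 : F) = ((2 : ℕ) : F) := by norm_num
      _ = ((ringChar F : ℕ) : F) := by rw [hr2]
      _ = 0 := CharP.cast_eq_zero F (ringChar F)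
  have h2 : ∀ x : F, x + x = 0 := fun x => by rw [← two_mul, hchar, zero_mul]
  have hq : (Fintype.card F : ℝ) = (2 : ℝ) ^ m := by exact_mod_cast hF
  have hPP : ∀ s, P s * P s = 1 := fun s => by
    have h := hPperm s; rwa [hPsymm] at h
  have hPnonneg : ∀ t i j, (0 : ℝ) ≤ P t i j := fun t i j => by
    rcases hP01 t i j with h | h <;> rw [h] <;> norm_num
  -- sum over F ∪ {y}
  have hsum' : ∑ a : Option F, P (emb a) = Jmat (F ⊕ Bool) - 1 := by
    have h := hPsum
    rw [Fintype.sum_sum_type, Fintype.sum_bool, hPx] at h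
    rw [Fintype.sum_option]
    show P (Sum.inr true) + ∑ b : F, P (Sum.inl b) = _
    rw [← h]
    abel
  -- zero diagonal of the P (emb a)
  have hemb : ∀ a : Option F, emb a ≠ Sum.inr false := by
    intro a; cases a <;> simp [emb]
  have hPdiag : ∀ (a : Option F) (s : F ⊕ Bool), P (emb a) s s = 0 := by
    intro a s
    have h1 : ∑ t : F ⊕ Bool, P t s s = 1 := by
      have h := congrFun (congrFun hPsum s) s
      rwa [Matrix.sum_apply] at h
    have h2' : P (Sum.inr false) s s = 1 := by rw [hPx]; exact Matrix.one_apply_eq s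
    have hrest : ∑ t ∈ Finset.univ.erase (Sum.inr false), P t s s = 0 := by
      have h3 : P (Sum.inr false) s s
          + ∑ t ∈ Finset.univ.erase (Sum.inr false), P t s s = ∑ t : F ⊕ Bool, P t s s :=
        Finset.add_sum_erase _ (fun t => P t s s) (Finset.mem_univ _)
      rw [h1, h2'] at h3
      linarith
    exact (Finset.sum_eq_zero_iff_of_nonneg
      (fun t _ => hPnonneg t s s)).mp hrest (emb a)
      (Finset.mem_erase.mpr ⟨hemb a, Finset.mem_univ _⟩)
  refine ⟨?_, fun α => ⟨?_, ?_, ?_, ?_⟩, fun α β => ?_, fun α => ?_⟩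
  -- (a) decomposition of J
  · have hsumN : ∑ α : F, Nmat P α = (Jmat (F ⊕ Bool) - 1) ⊗ₖ Jmat (F × F) := by
      show ∑ α : F, ∑ a : Option F, P (emb a) ⊗ₖ CmatE a α = _
      rw [Finset.sum_comm,
        Finset.sum_congr rfl fun a (_ : a ∈ Finset.univ) => by
          rw [← kron_sum, sum_CmatE],
        ← sum_kron, hsum']
    rw [hsumN, sub_kron, kron_sub, Jmat_kron_Jmat, Matrix.one_kronecker_one]
    abel
  -- (b1) symmetry
  · ext v w
    rw [Matrix.transpose_apply, hNapply, hNapply]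
    refine Finset.sum_congr rfl fun a _ => ?_
    have e1 : P (emb a) w.1 v.1 = P (emb a) v.1 w.1 := by
      calc P (emb a) w.1 v.1 = (P (emb a))ᵀ v.1 w.1 := rfl
        _ = P (emb a) v.1 w.1 := by rw [hPsymm]
    have e2 : CmatE a α w.2 v.2 = CmatE a α v.2 w.2 := by
      calc CmatE a α w.2 v.2 = (CmatE a α)ᵀ v.2 w.2 := rfl
        _ = CmatE a α v.2 w.2 := by rw [CmatE_transpose h2]
    rw [e1, e2]
  -- (b2) 0/1 matrix
  · intro v w
    rw [hNapply]
    apply sum01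
    · intro a
      rcases hP01 (emb a) v.1 w.1 with h | h <;>
        rcases hC01 a α v.2 w.2 with h' | h' <;> rw [h, h'] <;> norm_num
    · have hfle : ∀ a : Option F, P (emb a) v.1 w.1 * CmatE a α v.2 w.2 ≤ P (emb a) v.1 w.1 := by
        intro a
        rcases hC01 a α v.2 w.2 with h' | h' <;> rw [h']
        · rw [mul_zero]; exact hPnonneg _ _ _
        · rw [mul_one]
      calc ∑ a : Option F, P (emb a) v.1 w.1 * CmatE a α v.2 w.2
          ≤ ∑ a : Option F, P (emb a) v.1 w.1 := Finset.sum_le_sum fun a _ => hfle a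
        _ = (Jmat (F ⊕ Bool) - 1) v.1 w.1 := by
            have h := congrFun (congrFun hsum' v.1) w.1
            rwa [Matrix.sum_apply] at h
        _ ≤ 1 := by
            rw [Matrix.sub_apply, Jmat_apply, Matrix.one_apply]
            by_cases h : v.1 = w.1 <;> simp [h]
  -- (b3) zero diagonal
  · intro v
    rw [hNapply]
    exact Finset.sum_eq_zero fun a _ => by rw [hPdiag a v.1, zero_mul]
  -- (b4) square
  · rw [Nmul h2 P hPP α α, h2 α, hsum']
    have hcard2 : (Fintype.card (F ⊕ Bool) : ℝ) = (Fintype.card F : ℝ) + 2 := by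
      rw [Fintype.card_sum, Fintype.card_bool]
      push_cast
      ring
    have e2 : (Jmat (F ⊕ Bool) - 1) * (Jmat (F ⊕ Bool) - 1)
        = (Fintype.card F : ℝ) • Jmat (F ⊕ Bool) + 1 := by
      rw [Matrix.sub_mul, Matrix.mul_sub, Matrix.mul_sub, Matrix.one_mul, Matrix.mul_one,
        J_mul_J, hcard2, add_smul]
      rw [show ((2 : ℝ)) • Jmat (F ⊕ Bool) = Jmat (F ⊕ Bool) + Jmat (F ⊕ Bool) from
        two_smul ℝ _]
      rw [Matrix.one_mul]
      abel
    have e1 : ∑ a : Option F, ((Fintype.card F : ℝ) • CmatE a (0 : F) - Jmat (F × F))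
        = ((Fintype.card F : ℝ)) ^ 2 • (1 : Matrix (F × F) (F × F) ℝ) - Jmat (F × F) := by
      rw [Finset.sum_sub_distrib, ← Finset.smul_sum, sum_CmatE_zero h2, Finset.sum_const,
        Finset.card_univ, Fintype.card_option, ← Nat.cast_smul_eq_nsmul ℝ, smul_add, smul_smul]
      push_cast
      rw [add_smul, one_smul, ← pow_two]
      abel
    rw [← kron_sum, e1, e2, kron_sub, Matrix.kronecker_smul, Matrix.one_kronecker_one,
      Matrix.add_kronecker, Matrix.smul_kronecker, Jmat_kron_Jmat, ← hq]
    abel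
  -- (c1) commutativity
  · rw [Nmul h2 P hPP α β, Nmul h2 P hPP β α, add_comm β α]
  -- (c2) commutes with I ⊗ (J - I)
  · have hC : ∀ a : Option F, CmatE a α * (Jmat (F × F) - 1)
        = (Jmat (F × F) - 1) * CmatE a α := by
      intro a
      rw [Matrix.mul_sub, Matrix.sub_mul, Matrix.mul_one, Matrix.one_mul, CmatE_mul_J h2,
        J_mul_CmatE h2]
    show (∑ a : Option F, P (emb a) ⊗ₖ CmatE a α) * _ = _ * (∑ a : Option F, P (emb a) ⊗ₖ CmatE a α)
    rw [Finset.sum_mul, Finset.mul_sum]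
    refine Finset.sum_congr rfl fun a _ => ?_
    rw [← Matrix.mul_kronecker_mul, ← Matrix.mul_kronecker_mul, Matrix.mul_one, Matrix.one_mul,
      hC]
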